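/- arXiv:1702.03541 — 3 statements merged into one kernel-verified Lean document; each statement's English description precedes it below -/
import Mathlib

section
/- Fix an integer n ≥ 2. On ℝ^{2n} with coordinates (x₀,x₁,x₂,x₃,p₁,q₁,…,p_{n−2},q_{n−2}), define for smooth functions f,g : ℝ^{2n} → ℝ the bracket {f,g} = x₁(∂₀f·∂₁g − ∂₁f·∂₀g + ∂₂f·∂₃g − ∂₃f·∂₂g) + x₃(∂₀f·∂₃g − ∂₃f·∂₀g + ∂₁f·∂₂g − ∂₂f·∂₁g) + Σ_{i=1}^{n−2}(∂_{p_i}f·∂_{q_i}g − ∂_{q_i}f·∂_{p_i}g). Then this bracket satisfies the Jacobi identity: {f,{g,h}} + {g,{h,f}} + {h,{f,g}} = 0 for all smooth f, g, h : ℝ^{2n} → ℝ. -/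
/-- Partial derivative of `f : ℝ^m → ℝ` in the direction of the `i`-th coordinate. -/
noncomputable def pd {m : ℕ} (i : Fin m) (f : (Fin m → ℝ) → ℝ) (x : Fin m → ℝ) : ℝ :=
  fderiv ℝ f x (Pi.single i 1)

/-- The local-model Poisson bracket on ℝ^{2n} induced by a near-symplectic form:
coordinates `x₀,x₁,x₂,x₃` are indices `0,1,2,3`, and for `i = 1,…,n-2` the coordinates
`p_i, q_i` are the indices `4 + 2(i-1)` and `5 + 2(i-1)`. -/
noncomputable def nearSympBracket (n : ℕ) (hn : 2 ≤ n)
    (f g : (Fin (2 * n) → ℝ) → ℝ) : (Fin (2 * n) → ℝ) → ℝ :=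
  fun x =>
    x ⟨1, by omega⟩ *
      (pd ⟨0, by omega⟩ f x * pd ⟨1, by omega⟩ g x
        - pd ⟨1, by omega⟩ f x * pd ⟨0, by omega⟩ g x
        + pd ⟨2, by omega⟩ f x * pd ⟨3, by omega⟩ g x
        - pd ⟨3, by omega⟩ f x * pd ⟨2, by omega⟩ g x)
    + x ⟨3, by omega⟩ *
      (pd ⟨0, by omega⟩ f x * pd ⟨3, by omega⟩ g x
        - pd ⟨3, by omega⟩ f x * pd ⟨0, by omega⟩ g x
        + pd ⟨1, by omega⟩ f x * pd ⟨2, by omega⟩ g x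
        - pd ⟨2, by omega⟩ f x * pd ⟨1, by omega⟩ g x)
    + ∑ i : Fin (n - 2),
        (pd ⟨4 + 2 * i.1, by have := i.2; omega⟩ f x *
            pd ⟨5 + 2 * i.1, by have := i.2; omega⟩ g x
          - pd ⟨5 + 2 * i.1, by have := i.2; omega⟩ f x *
            pd ⟨4 + 2 * i.1, by have := i.2; omega⟩ g x)


open Finset

section helpers
variable {m : ℕ} {x : Fin m → ℝ}

lemma pd_contDiff {f : (Fin m → ℝ) → ℝ} (hf : ContDiff ℝ (⊤ : ℕ∞) f) (i : Fin m) :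
    ContDiff ℝ (⊤ : ℕ∞) (pd i f) := by
  have h1 : ContDiff ℝ (⊤ : ℕ∞) (fderiv ℝ f) := hf.fderiv_right (by exact_mod_cast le_top)
  exact h1.clm_apply contDiff_const

lemma pd_mul {f g : (Fin m → ℝ) → ℝ} (hf : DifferentiableAt ℝ f x)
    (hg : DifferentiableAt ℝ g x) (i : Fin m) :
    pd i (fun y => f y * g y) x = pd i f x * g x + f x * pd i g x := by
  unfold pd
  rw [fderiv_fun_mul hf hg]
  simp
  ring

lemma pd_sum {ι : Type*} (s : Finset ι) {F : ι → (Fin m → ℝ) → ℝ}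
    (hF : ∀ j ∈ s, DifferentiableAt ℝ (F j) x) (i : Fin m) :
    pd i (fun y => ∑ j ∈ s, F j y) x = ∑ j ∈ s, pd i (F j) x := by
  unfold pd
  rw [fderiv_fun_sum hF]
  simp

lemma pd_const (c : ℝ) (i : Fin m) : pd i (fun _ => c) x = 0 := by
  unfold pd; simp

lemma pd_add {f g : (Fin m → ℝ) → ℝ} (hf : DifferentiableAt ℝ f x)
    (hg : DifferentiableAt ℝ g x) (i : Fin m) :
    pd i (fun y => f y + g y) x = pd i f x + pd i g x := by
  unfold pd; rw [fderiv_fun_add hf hg]; simp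

lemma pd_const_mul {f : (Fin m → ℝ) → ℝ} (hf : DifferentiableAt ℝ f x) (c : ℝ) (i : Fin m) :
    pd i (fun y => c * f y) x = c * pd i f x := by
  unfold pd; rw [fderiv_const_mul hf]; simp

lemma pd_coord (u i : Fin m) : pd i (fun y => y u) x = if u = i then 1 else 0 := by
  unfold pd
  have : (fun y : Fin m → ℝ => y u) = (ContinuousLinearMap.proj u : (Fin m → ℝ) →L[ℝ] ℝ) := rfl
  rw [this, ContinuousLinearMap.fderiv]
  simp [Pi.single_apply]

lemma pd_comm {f : (Fin m → ℝ) → ℝ} (hf : ContDiff ℝ (⊤ : ℕ∞) f) (i j : Fin m) :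
    pd i (pd j f) x = pd j (pd i f) x := by
  have h1 : ContDiff ℝ (⊤ : ℕ∞) (fderiv ℝ f) := hf.fderiv_right (by exact_mod_cast le_top)
  have hd : DifferentiableAt ℝ (fderiv ℝ f) x :=
    (h1.differentiable (by simp)).differentiableAt
  have key : ∀ u v : Fin m, pd u (pd v f) x
      = fderiv ℝ (fderiv ℝ f) x (Pi.single u 1) (Pi.single v 1) := by
    intro u v
    unfold pd
    rw [fderiv_clm_apply hd (differentiableAt_const _)]
    simp
  rw [key, key]
  exact (hf.contDiffAt.isSymmSndFDerivAt (by rw [minSmoothness_of_isRCLikeNormedField]; exact WithTop.coe_le_coe.mpr le_top)) _ _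

end helpers

lemma alg {m : ℕ} (A : Fin m → Fin m → ℝ) (W : Fin m → Fin m → Fin m → ℝ)
    (F G H : Fin m → ℝ) (F2 G2 H2 : Fin m → Fin m → ℝ)
    (hA : ∀ i j, A j i = - A i j)
    (hF2 : ∀ i j, F2 i j = F2 j i) (hG2 : ∀ i j, G2 i j = G2 j i)
    (hH2 : ∀ i j, H2 i j = H2 j i)
    (hW : ∀ k i j, ∑ l : Fin m, (A k l * W l i j + A i l * W l j k + A j l * W l k i) = 0) :
    (∑ k : Fin m, ∑ i : Fin m, ∑ j : Fin m, ∑ l : Fin m,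
        A k l * F k * (W l i j * G i * H j + A i j * G2 l i * H j + A i j * G i * H2 l j))
    + (∑ k : Fin m, ∑ i : Fin m, ∑ j : Fin m, ∑ l : Fin m,
        A k l * G k * (W l i j * H i * F j + A i j * H2 l i * F j + A i j * H i * F2 l j))
    + (∑ k : Fin m, ∑ i : Fin m, ∑ j : Fin m, ∑ l : Fin m,
        A k l * H k * (W l i j * F i * G j + A i j * F2 l i * G j + A i j * F i * G2 l j)) = 0 := by
  classical
  have flat : ∀ X : Fin m → Fin m → Fin m → Fin m → ℝ,
      (∑ k : Fin m, ∑ i : Fin m, ∑ j : Fin m, ∑ l : Fin m, X k i j l)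
        = ∑ q : Fin m × Fin m × Fin m × Fin m, X q.1 q.2.1 q.2.2.1 q.2.2.2 := by
    intro X
    simp only [Fintype.sum_prod_type]
  -- names for the nine flattened sums
  set t1f : Fin m × Fin m × Fin m × Fin m → ℝ :=
    fun q => F q.1 * G q.2.1 * H q.2.2.1 * (A q.1 q.2.2.2 * W q.2.2.2 q.2.1 q.2.2.1) with ht1f
  set t2f : Fin m × Fin m × Fin m × Fin m → ℝ :=
    fun q => A q.1 q.2.2.2 * A q.2.1 q.2.2.1 * F q.1 * G2 q.2.2.2 q.2.1 * H q.2.2.1 with ht2f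
  set t3f : Fin m × Fin m × Fin m × Fin m → ℝ :=
    fun q => A q.1 q.2.2.2 * A q.2.1 q.2.2.1 * F q.1 * G q.2.1 * H2 q.2.2.2 q.2.2.1 with ht3f
  set t1g : Fin m × Fin m × Fin m × Fin m → ℝ :=
    fun q => G q.1 * H q.2.1 * F q.2.2.1 * (A q.1 q.2.2.2 * W q.2.2.2 q.2.1 q.2.2.1) with ht1g
  set t2g : Fin m × Fin m × Fin m × Fin m → ℝ :=
    fun q => A q.1 q.2.2.2 * A q.2.1 q.2.2.1 * G q.1 * H2 q.2.2.2 q.2.1 * F q.2.2.1 with ht2g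
  set t3g : Fin m × Fin m × Fin m × Fin m → ℝ :=
    fun q => A q.1 q.2.2.2 * A q.2.1 q.2.2.1 * G q.1 * H q.2.1 * F2 q.2.2.2 q.2.2.1 with ht3g
  set t1h : Fin m × Fin m × Fin m × Fin m → ℝ :=
    fun q => H q.1 * F q.2.1 * G q.2.2.1 * (A q.1 q.2.2.2 * W q.2.2.2 q.2.1 q.2.2.1) with ht1h
  set t2h : Fin m × Fin m × Fin m × Fin m → ℝ :=
    fun q => A q.1 q.2.2.2 * A q.2.1 q.2.2.1 * H q.1 * F2 q.2.2.2 q.2.1 * G q.2.2.1 with ht2h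
  set t3h : Fin m × Fin m × Fin m × Fin m → ℝ :=
    fun q => A q.1 q.2.2.2 * A q.2.1 q.2.2.1 * H q.1 * F q.2.1 * G2 q.2.2.2 q.2.2.1 with ht3h
  have splitf : (∑ k : Fin m, ∑ i : Fin m, ∑ j : Fin m, ∑ l : Fin m,
        A k l * F k * (W l i j * G i * H j + A i j * G2 l i * H j + A i j * G i * H2 l j))
      = (∑ q, t1f q) + (∑ q, t2f q) + (∑ q, t3f q) := by
    rw [flat, ← Finset.sum_add_distrib, ← Finset.sum_add_distrib]
    refine Finset.sum_congr rfl fun q _ => ?_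
    simp only [ht1f, ht2f, ht3f]; ring
  have splitg : (∑ k : Fin m, ∑ i : Fin m, ∑ j : Fin m, ∑ l : Fin m,
        A k l * G k * (W l i j * H i * F j + A i j * H2 l i * F j + A i j * H i * F2 l j))
      = (∑ q, t1g q) + (∑ q, t2g q) + (∑ q, t3g q) := by
    rw [flat, ← Finset.sum_add_distrib, ← Finset.sum_add_distrib]
    refine Finset.sum_congr rfl fun q _ => ?_
    simp only [ht1g, ht2g, ht3g]; ring
  have splith : (∑ k : Fin m, ∑ i : Fin m, ∑ j : Fin m, ∑ l : Fin m,
        A k l * H k * (W l i j * F i * G j + A i j * F2 l i * G j + A i j * F i * G2 l j))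
      = (∑ q, t1h q) + (∑ q, t2h q) + (∑ q, t3h q) := by
    rw [flat, ← Finset.sum_add_distrib, ← Finset.sum_add_distrib]
    refine Finset.sum_congr rfl fun q _ => ?_
    simp only [ht1h, ht2h, ht3h]; ring
  -- equivs
  let e1 : (Fin m × Fin m × Fin m × Fin m) ≃ (Fin m × Fin m × Fin m × Fin m) :=
    ⟨fun q => (q.2.2.1, q.1, q.2.2.2, q.2.1), fun q => (q.2.1, q.2.2.2, q.1, q.2.2.1),
      fun q => rfl, fun q => rfl⟩
  let e2 : (Fin m × Fin m × Fin m × Fin m) ≃ (Fin m × Fin m × Fin m × Fin m) :=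
    ⟨fun q => (q.2.1, q.2.2.1, q.1, q.2.2.2), fun q => (q.2.2.1, q.1, q.2.1, q.2.2.2),
      fun q => rfl, fun q => rfl⟩
  let e3 : (Fin m × Fin m × Fin m × Fin m) ≃ (Fin m × Fin m × Fin m × Fin m) :=
    ⟨fun q => (q.2.2.1, q.1, q.2.1, q.2.2.2), fun q => (q.2.1, q.2.2.1, q.1, q.2.2.2),
      fun q => rfl, fun q => rfl⟩
  let e4 : (Fin m × Fin m × Fin m × Fin m) ≃ (Fin m × Fin m × Fin m × Fin m) :=
    ⟨fun q => (q.2.1, q.2.2.2, q.1, q.2.2.1), fun q => (q.2.2.1, q.1, q.2.2.2, q.2.1),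
      fun q => rfl, fun q => rfl⟩
  -- group 1
  have hg1 : (∑ q, t1g q)
      = ∑ q : Fin m × Fin m × Fin m × Fin m,
          F q.1 * G q.2.1 * H q.2.2.1 * (A q.2.1 q.2.2.2 * W q.2.2.2 q.2.2.1 q.1) := by
    refine (Fintype.sum_equiv e2 _ _ ?_).symm
    rintro ⟨k, i, j, l⟩
    simp only [ht1g, e2, Equiv.coe_fn_mk]
    ring
  have hg2 : (∑ q, t1h q)
      = ∑ q : Fin m × Fin m × Fin m × Fin m,
          F q.1 * G q.2.1 * H q.2.2.1 * (A q.2.2.1 q.2.2.2 * W q.2.2.2 q.1 q.2.1) := by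
    refine (Fintype.sum_equiv e3 _ _ ?_).symm
    rintro ⟨k, i, j, l⟩
    simp only [ht1h, e3, Equiv.coe_fn_mk]
    ring
  have group1 : (∑ q, t1f q) + (∑ q, t1g q) + (∑ q, t1h q) = 0 := by
    rw [hg1, hg2, ← Finset.sum_add_distrib, ← Finset.sum_add_distrib, ← flat
      (fun k i j l => F k * G i * H j * (A k l * W l i j) + F k * G i * H j * (A i l * W l j k)
        + F k * G i * H j * (A j l * W l k i))]
    refine Finset.sum_eq_zero fun k _ => Finset.sum_eq_zero fun i _ =>
      Finset.sum_eq_zero fun j _ => ?_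
    have : ∀ l, F k * G i * H j * (A k l * W l i j) + F k * G i * H j * (A i l * W l j k)
        + F k * G i * H j * (A j l * W l k i)
        = F k * G i * H j * (A k l * W l i j + A i l * W l j k + A j l * W l k i) := by
      intro l; ring
    rw [Finset.sum_congr rfl fun l _ => this l, ← Finset.mul_sum, hW, mul_zero]
  -- pairs
  have pair1 : (∑ q, t2f q) + (∑ q, t3h q) = 0 := by
    have : (∑ q, t3h q) = ∑ q, -t2f q := by
      refine (Fintype.sum_equiv e1 _ _ ?_).symm
      rintro ⟨k, i, j, l⟩
      simp only [ht2f, ht3h, e1, Equiv.coe_fn_mk]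
      rw [hA i j, hG2 l i]
      ring
    rw [this, Finset.sum_neg_distrib]
    ring
  have pair2 : (∑ q, t3f q) + (∑ q, t2g q) = 0 := by
    have : (∑ q, t2g q) = ∑ q, -t3f q := by
      refine (Fintype.sum_equiv e4 _ _ ?_).symm
      rintro ⟨k, i, j, l⟩
      simp only [ht3f, ht2g, e4, Equiv.coe_fn_mk]
      rw [hA k l, hH2 j l]
      ring
    rw [this, Finset.sum_neg_distrib]
    ring
  have pair3 : (∑ q, t2h q) + (∑ q, t3g q) = 0 := by
    have : (∑ q, t3g q) = ∑ q, -t2h q := by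
      refine (Fintype.sum_equiv e1 _ _ ?_).symm
      rintro ⟨k, i, j, l⟩
      simp only [ht2h, ht3g, e1, Equiv.coe_fn_mk]
      rw [hA i j, hF2 l i]
      ring
    rw [this, Finset.sum_neg_distrib]
    ring
  rw [splitf, splitg, splith]
  linarith [group1, pair1, pair2, pair3]
noncomputable def Br {m : ℕ} (a : Fin m → Fin m → (Fin m → ℝ) → ℝ)
    (f g : (Fin m → ℝ) → ℝ) : (Fin m → ℝ) → ℝ :=
  fun x => ∑ i : Fin m, ∑ j : Fin m, a i j x * pd i f x * pd j g x

lemma cd_diff {m : ℕ} {f : (Fin m → ℝ) → ℝ} (hf : ContDiff ℝ (⊤ : ℕ∞) f) :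
    Differentiable ℝ f := hf.differentiable (by norm_cast)

lemma Br_contDiff {m : ℕ} {a : Fin m → Fin m → (Fin m → ℝ) → ℝ}
    (ha : ∀ i j, ContDiff ℝ (⊤ : ℕ∞) (a i j)) {f g : (Fin m → ℝ) → ℝ}
    (hf : ContDiff ℝ (⊤ : ℕ∞) f) (hg : ContDiff ℝ (⊤ : ℕ∞) g) :
    ContDiff ℝ (⊤ : ℕ∞) (Br a f g) := by
  unfold Br
  refine ContDiff.sum fun i _ => ContDiff.sum fun j _ => ?_
  exact ((ha i j).mul (pd_contDiff hf i)).mul (pd_contDiff hg j)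

lemma pd_Br {m : ℕ} {a : Fin m → Fin m → (Fin m → ℝ) → ℝ}
    (ha : ∀ i j, ContDiff ℝ (⊤ : ℕ∞) (a i j)) {g h : (Fin m → ℝ) → ℝ}
    (hg : ContDiff ℝ (⊤ : ℕ∞) g) (hh : ContDiff ℝ (⊤ : ℕ∞) h)
    (x : Fin m → ℝ) (l : Fin m) :
    pd l (Br a g h) x = ∑ i : Fin m, ∑ j : Fin m,
      (pd l (a i j) x * pd i g x * pd j h x
        + a i j x * pd l (pd i g) x * pd j h x
        + a i j x * pd i g x * pd l (pd j h) x) := by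
  have dA : ∀ i j : Fin m, DifferentiableAt ℝ (a i j) x := fun i j => cd_diff (ha i j) x
  have dG : ∀ i : Fin m, DifferentiableAt ℝ (pd i g) x := fun i => cd_diff (pd_contDiff hg i) x
  have dH : ∀ j : Fin m, DifferentiableAt ℝ (pd j h) x := fun j => cd_diff (pd_contDiff hh j) x
  have dAG : ∀ i j : Fin m, DifferentiableAt ℝ (fun y => a i j y * pd i g y) x :=
    fun i j => (dA i j).mul (dG i)
  have dAGH : ∀ i j : Fin m, DifferentiableAt ℝ (fun y => a i j y * pd i g y * pd j h y) x :=
    fun i j => (dAG i j).mul (dH j)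
  have dsum : ∀ i ∈ (Finset.univ : Finset (Fin m)),
      DifferentiableAt ℝ (fun y => ∑ j : Fin m, a i j y * pd i g y * pd j h y) x :=
    fun i _ => DifferentiableAt.fun_sum fun j _ => dAGH i j
  unfold Br
  rw [pd_sum _ dsum]
  refine Finset.sum_congr rfl fun i _ => ?_
  rw [pd_sum _ fun j _ => dAGH i j]
  refine Finset.sum_congr rfl fun j _ => ?_
  rw [pd_mul (dAG i j) (dH j), pd_mul (dA i j) (dG i)]
  ring

theorem jacobi_abstract {m : ℕ} (a : Fin m → Fin m → (Fin m → ℝ) → ℝ)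
    (ha : ∀ i j, ContDiff ℝ (⊤ : ℕ∞) (a i j))
    (hanti : ∀ i j (y : Fin m → ℝ), a j i y = - a i j y)
    (hcond : ∀ k i j (y : Fin m → ℝ),
      ∑ l : Fin m, (a k l y * pd l (a i j) y + a i l y * pd l (a j k) y
        + a j l y * pd l (a k i) y) = 0)
    (f g h : (Fin m → ℝ) → ℝ)
    (hf : ContDiff ℝ (⊤ : ℕ∞) f) (hg : ContDiff ℝ (⊤ : ℕ∞) g)
    (hh : ContDiff ℝ (⊤ : ℕ∞) h) (x : Fin m → ℝ) :
    Br a f (Br a g h) x + Br a g (Br a h f) x + Br a h (Br a f g) x = 0 := by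
  have main : ∀ u v w : (Fin m → ℝ) → ℝ, ContDiff ℝ (⊤ : ℕ∞) u → ContDiff ℝ (⊤ : ℕ∞) v →
      ContDiff ℝ (⊤ : ℕ∞) w →
      Br a u (Br a v w) x = ∑ k : Fin m, ∑ i : Fin m, ∑ j : Fin m, ∑ l : Fin m,
        a k l x * pd k u x *
          ((pd l (a i j) x) * pd i v x * pd j w x
            + a i j x * pd l (pd i v) x * pd j w x
            + a i j x * pd i v x * pd l (pd j w) x) := by
    intro u v w hu hv hw
    have step1 : Br a u (Br a v w) x
        = ∑ k : Fin m, ∑ l : Fin m, ∑ i : Fin m, ∑ j : Fin m,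
          a k l x * pd k u x *
            ((pd l (a i j) x) * pd i v x * pd j w x
              + a i j x * pd l (pd i v) x * pd j w x
              + a i j x * pd i v x * pd l (pd j w) x) := by
      show (∑ k : Fin m, ∑ l : Fin m, a k l x * pd k u x * pd l (Br a v w) x) = _
      refine Finset.sum_congr rfl fun k _ => Finset.sum_congr rfl fun l _ => ?_
      rw [pd_Br ha hv hw x l, Finset.mul_sum]
      refine Finset.sum_congr rfl fun i _ => ?_
      rw [Finset.mul_sum]
    rw [step1]
    refine Finset.sum_congr rfl fun k _ => ?_
    rw [Finset.sum_comm]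
    exact Finset.sum_congr rfl fun i _ => Finset.sum_comm
  rw [main f g h hf hg hh, main g h f hg hh hf, main h f g hh hf hg]
  exact alg (fun i j => a i j x) (fun l i j => pd l (a i j) x)
    (fun i => pd i f x) (fun i => pd i g x) (fun i => pd i h x)
    (fun l i => pd l (pd i f) x) (fun l i => pd l (pd i g) x) (fun l i => pd l (pd i h) x)
    (fun i j => hanti i j x)
    (fun i j => pd_comm hf i j) (fun i j => pd_comm hg i j) (fun i j => pd_comm hh i j)
    (fun k i j => hcond k i j x)
-- ## Concrete data

noncomputable def dl {M : ℕ} (i u : Fin M) : ℝ := if i = u then 1 else 0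

def I0 (n : ℕ) (hn : 2 ≤ n) : Fin (2 * n) := ⟨0, by omega⟩
def I1 (n : ℕ) (hn : 2 ≤ n) : Fin (2 * n) := ⟨1, by omega⟩
def I2 (n : ℕ) (hn : 2 ≤ n) : Fin (2 * n) := ⟨2, by omega⟩
def I3 (n : ℕ) (hn : 2 ≤ n) : Fin (2 * n) := ⟨3, by omega⟩
def Pk (n : ℕ) (hn : 2 ≤ n) (k : Fin (n - 2)) : Fin (2 * n) :=
  ⟨4 + 2 * k.1, by have := k.2; omega⟩
def Qk (n : ℕ) (hn : 2 ≤ n) (k : Fin (n - 2)) : Fin (2 * n) :=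
  ⟨5 + 2 * k.1, by have := k.2; omega⟩

noncomputable def cM (n : ℕ) (hn : 2 ≤ n) (i j : Fin (2 * n)) : ℝ :=
  dl i (I0 n hn) * dl j (I1 n hn) - dl i (I1 n hn) * dl j (I0 n hn)
    + dl i (I2 n hn) * dl j (I3 n hn) - dl i (I3 n hn) * dl j (I2 n hn)

noncomputable def dM (n : ℕ) (hn : 2 ≤ n) (i j : Fin (2 * n)) : ℝ :=
  dl i (I0 n hn) * dl j (I3 n hn) - dl i (I3 n hn) * dl j (I0 n hn)
    + dl i (I1 n hn) * dl j (I2 n hn) - dl i (I2 n hn) * dl j (I1 n hn)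

noncomputable def eM (n : ℕ) (hn : 2 ≤ n) (i j : Fin (2 * n)) : ℝ :=
  ∑ k : Fin (n - 2),
    (dl i (Pk n hn k) * dl j (Qk n hn k) - dl i (Qk n hn k) * dl j (Pk n hn k))

noncomputable def aM (n : ℕ) (hn : 2 ≤ n) (i j : Fin (2 * n)) :
    (Fin (2 * n) → ℝ) → ℝ :=
  fun x => cM n hn i j * x (I1 n hn) + dM n hn i j * x (I3 n hn) + eM n hn i j

lemma aM_contDiff (n : ℕ) (hn : 2 ≤ n) (i j : Fin (2 * n)) :
    ContDiff ℝ (⊤ : ℕ∞) (aM n hn i j) := by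
  unfold aM
  exact ((contDiff_const.mul (contDiff_apply ℝ ℝ (I1 n hn))).add
    (contDiff_const.mul (contDiff_apply ℝ ℝ (I3 n hn)))).add contDiff_const

lemma aM_anti (n : ℕ) (hn : 2 ≤ n) (i j : Fin (2 * n)) (y : Fin (2 * n) → ℝ) :
    aM n hn j i y = - aM n hn i j y := by
  have he : eM n hn j i = - eM n hn i j := by
    unfold eM
    rw [← Finset.sum_neg_distrib]
    exact Finset.sum_congr rfl fun k _ => by ring
  unfold aM
  rw [he]
  unfold cM dM
  ring

lemma pd_aM (n : ℕ) (hn : 2 ≤ n) (i j : Fin (2 * n)) (y : Fin (2 * n) → ℝ) (l : Fin (2 * n)) :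
    pd l (aM n hn i j) y
      = cM n hn i j * dl (I1 n hn) l + dM n hn i j * dl (I3 n hn) l := by
  unfold aM
  have dcoord : ∀ u : Fin (2 * n), DifferentiableAt ℝ (fun x : Fin (2 * n) → ℝ => x u) y :=
    fun u => cd_diff (contDiff_apply ℝ ℝ u) y
  have d1 : DifferentiableAt ℝ (fun x : Fin (2 * n) → ℝ => cM n hn i j * x (I1 n hn)) y :=
    (dcoord _).const_mul _
  have d2 : DifferentiableAt ℝ (fun x : Fin (2 * n) → ℝ => dM n hn i j * x (I3 n hn)) y :=
    (dcoord _).const_mul _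
  rw [pd_add (d1.fun_add d2) (differentiableAt_const _), pd_add d1 d2,
    pd_const_mul (dcoord _), pd_const_mul (dcoord _), pd_const, pd_coord, pd_coord]
  unfold dl
  ring

lemma collapse1 {M : ℕ} (u : Fin M) (φ : Fin M → ℝ) :
    ∑ l : Fin M, dl u l * φ l = φ u := by
  simp [dl, ite_mul, Finset.sum_ite_eq]

lemma collapse2 {M : ℕ} (u : Fin M) (φ : Fin M → ℝ) :
    ∑ l : Fin M, dl l u * φ l = φ u := by
  simp [dl, ite_mul, Finset.sum_ite_eq']

lemma collapse_pair {M : ℕ} (u v : Fin M) (F G : Fin M → ℝ) :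
    (∑ i : Fin M, ∑ j : Fin M, (dl i u * dl j v) * (F i * G j)) = F u * G v := by
  have h1 : ∀ i : Fin M, (∑ j : Fin M, (dl i u * dl j v) * (F i * G j))
      = dl i u * F i * G v := by
    intro i
    rw [show dl i u * F i * G v = dl i u * F i * ∑ j : Fin M, dl j v * G j by
      rw [collapse2], Finset.mul_sum]
    exact Finset.sum_congr rfl fun j _ => by ring
  rw [Finset.sum_congr rfl fun i _ => h1 i,
    Finset.sum_congr rfl fun i _ =>
      (by ring : dl i u * F i * G v = dl i u * (fun i => F i * G v) i),
    collapse2]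
lemma dl_self {M : ℕ} (u : Fin M) : dl u u = 1 := if_pos rfl

lemma dl_ne {M : ℕ} {u v : Fin M} (h : u.1 ≠ v.1) : dl u v = 0 :=
  if_neg fun e => h (congrArg Fin.val e)

lemma eM_lt4 (n : ℕ) (hn : 2 ≤ n) (i j : Fin (2 * n)) (hj : j.1 < 4) : eM n hn i j = 0 := by
  unfold eM
  refine Finset.sum_eq_zero fun k _ => ?_
  have h1 : j ≠ Qk n hn k := Fin.ne_of_val_ne (by simp only [Qk]; omega)
  have h2 : j ≠ Pk n hn k := Fin.ne_of_val_ne (by simp only [Pk]; omega)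
  simp [dl, h1, h2]

lemma aM_cond (n : ℕ) (hn : 2 ≤ n) (p q r : Fin (2 * n)) (y : Fin (2 * n) → ℝ) :
    ∑ l : Fin (2 * n), (aM n hn p l y * pd l (aM n hn q r) y
      + aM n hn q l y * pd l (aM n hn r p) y
      + aM n hn r l y * pd l (aM n hn p q) y) = 0 := by
  have step : ∀ l, aM n hn p l y * pd l (aM n hn q r) y
        + aM n hn q l y * pd l (aM n hn r p) y
        + aM n hn r l y * pd l (aM n hn p q) y
      = cM n hn q r * (dl (I1 n hn) l * aM n hn p l y)
        + dM n hn q r * (dl (I3 n hn) l * aM n hn p l y)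
        + (cM n hn r p * (dl (I1 n hn) l * aM n hn q l y)
          + dM n hn r p * (dl (I3 n hn) l * aM n hn q l y))
        + (cM n hn p q * (dl (I1 n hn) l * aM n hn r l y)
          + dM n hn p q * (dl (I3 n hn) l * aM n hn r l y)) := by
    intro l
    rw [pd_aM, pd_aM, pd_aM]
    ring
  rw [Finset.sum_congr rfl fun l _ => step l]
  simp only [Finset.sum_add_distrib]
  rw [← Finset.mul_sum, ← Finset.mul_sum, ← Finset.mul_sum, ← Finset.mul_sum,
    ← Finset.mul_sum, ← Finset.mul_sum]
  rw [collapse1, collapse1, collapse1, collapse1, collapse1, collapse1]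
  have e1 : ∀ s : Fin (2 * n), eM n hn s (I1 n hn) = 0 :=
    fun s => eM_lt4 n hn s _ (by simp [I1])
  have e3 : ∀ s : Fin (2 * n), eM n hn s (I3 n hn) = 0 :=
    fun s => eM_lt4 n hn s _ (by simp [I3])
  simp only [aM, e1, e3, add_zero]
  simp only [cM, dM, I0, I1, I2, I3]
  simp only [dl_self, dl_ne, ne_eq, Fin.mk.injEq, Nat.succ_ne_self, OfNat.ofNat_ne_zero,
    OfNat.ofNat_ne_one, Nat.reduceEqDiff, not_false_eq_true, zero_ne_one, one_ne_zero]
  ring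


lemma brEq (n : ℕ) (hn : 2 ≤ n) (f g : (Fin (2 * n) → ℝ) → ℝ) (x : Fin (2 * n) → ℝ) :
    nearSympBracket n hn f g x = Br (aM n hn) f g x := by
  have hsplit : Br (aM n hn) f g x
      = x (I1 n hn) * (∑ i : Fin (2 * n), ∑ j : Fin (2 * n),
            cM n hn i j * (pd i f x * pd j g x))
        + x (I3 n hn) * (∑ i : Fin (2 * n), ∑ j : Fin (2 * n),
            dM n hn i j * (pd i f x * pd j g x))
        + ∑ i : Fin (2 * n), ∑ j : Fin (2 * n), eM n hn i j * (pd i f x * pd j g x) := by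
    unfold Br
    rw [Finset.mul_sum, Finset.mul_sum, ← Finset.sum_add_distrib, ← Finset.sum_add_distrib]
    refine Finset.sum_congr rfl fun i _ => ?_
    rw [Finset.mul_sum, Finset.mul_sum, ← Finset.sum_add_distrib, ← Finset.sum_add_distrib]
    refine Finset.sum_congr rfl fun j _ => ?_
    simp only [aM]
    ring
  have hC : (∑ i : Fin (2 * n), ∑ j : Fin (2 * n), cM n hn i j * (pd i f x * pd j g x))
      = pd (I0 n hn) f x * pd (I1 n hn) g x - pd (I1 n hn) f x * pd (I0 n hn) g x
        + pd (I2 n hn) f x * pd (I3 n hn) g x - pd (I3 n hn) f x * pd (I2 n hn) g x := by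
    have e : ∀ i j : Fin (2 * n), cM n hn i j * (pd i f x * pd j g x)
        = (dl i (I0 n hn) * dl j (I1 n hn)) * (pd i f x * pd j g x)
          - (dl i (I1 n hn) * dl j (I0 n hn)) * (pd i f x * pd j g x)
          + (dl i (I2 n hn) * dl j (I3 n hn)) * (pd i f x * pd j g x)
          - (dl i (I3 n hn) * dl j (I2 n hn)) * (pd i f x * pd j g x) := by
      intro i j; simp only [cM]; ring
    rw [Finset.sum_congr rfl fun i _ => Finset.sum_congr rfl fun j _ => e i j]
    simp only [Finset.sum_sub_distrib, Finset.sum_add_distrib]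
    rw [collapse_pair, collapse_pair, collapse_pair, collapse_pair]
  have hD : (∑ i : Fin (2 * n), ∑ j : Fin (2 * n), dM n hn i j * (pd i f x * pd j g x))
      = pd (I0 n hn) f x * pd (I3 n hn) g x - pd (I3 n hn) f x * pd (I0 n hn) g x
        + pd (I1 n hn) f x * pd (I2 n hn) g x - pd (I2 n hn) f x * pd (I1 n hn) g x := by
    have e : ∀ i j : Fin (2 * n), dM n hn i j * (pd i f x * pd j g x)
        = (dl i (I0 n hn) * dl j (I3 n hn)) * (pd i f x * pd j g x)
          - (dl i (I3 n hn) * dl j (I0 n hn)) * (pd i f x * pd j g x)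
          + (dl i (I1 n hn) * dl j (I2 n hn)) * (pd i f x * pd j g x)
          - (dl i (I2 n hn) * dl j (I1 n hn)) * (pd i f x * pd j g x) := by
      intro i j; simp only [dM]; ring
    rw [Finset.sum_congr rfl fun i _ => Finset.sum_congr rfl fun j _ => e i j]
    simp only [Finset.sum_sub_distrib, Finset.sum_add_distrib]
    rw [collapse_pair, collapse_pair, collapse_pair, collapse_pair]
  have hE : (∑ i : Fin (2 * n), ∑ j : Fin (2 * n), eM n hn i j * (pd i f x * pd j g x))
      = ∑ k : Fin (n - 2), (pd (Pk n hn k) f x * pd (Qk n hn k) g x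
          - pd (Qk n hn k) f x * pd (Pk n hn k) g x) := by
    have e : ∀ i j : Fin (2 * n), eM n hn i j * (pd i f x * pd j g x)
        = ∑ k : Fin (n - 2), ((dl i (Pk n hn k) * dl j (Qk n hn k)) * (pd i f x * pd j g x)
            - (dl i (Qk n hn k) * dl j (Pk n hn k)) * (pd i f x * pd j g x)) := by
      intro i j
      rw [eM, Finset.sum_mul]
      exact Finset.sum_congr rfl fun k _ => by ring
    rw [Finset.sum_congr rfl fun i _ => Finset.sum_congr rfl fun j _ => e i j]
    rw [Finset.sum_congr rfl fun i _ => Finset.sum_comm]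
    rw [Finset.sum_comm]
    refine Finset.sum_congr rfl fun k _ => ?_
    simp only [Finset.sum_sub_distrib]
    rw [collapse_pair, collapse_pair]
  rw [hsplit, hC, hD, hE]
  rfl

/-- The near-symplectic local-model bracket on ℝ^{2n} satisfies the Jacobi identity. -/
theorem nearSympBracket_jacobi (n : ℕ) (hn : 2 ≤ n)
    (f g h : (Fin (2 * n) → ℝ) → ℝ)
    (hf : ContDiff ℝ (⊤ : ℕ∞) f) (hg : ContDiff ℝ (⊤ : ℕ∞) g)
    (hh : ContDiff ℝ (⊤ : ℕ∞) h) (x : Fin (2 * n) → ℝ) :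
    nearSympBracket n hn f (nearSympBracket n hn g h) x
      + nearSympBracket n hn g (nearSympBracket n hn h f) x
      + nearSympBracket n hn h (nearSympBracket n hn f g) x = 0 := by
  have he : ∀ u v : (Fin (2 * n) → ℝ) → ℝ,
      nearSympBracket n hn u v = Br (aM n hn) u v :=
    fun u v => funext fun y => brEq n hn u v y
  simp only [he]
  exact jacobi_abstract (aM n hn) (aM_contDiff n hn) (aM_anti n hn)
    (fun k i j y => aM_cond n hn k i j y) f g h hf hg hh x
end

section
/- Let Y = (Y₀,Y₁,Y₂,Y₃) be a quadruple of real polynomials in x₀,x₁,x₂,x₃, acting on polynomials by Y(f) = Σᵢ Yᵢ·∂ᵢf. Suppose Y is a Poisson derivation of the near-positive bracket, i.e. Y({f,g}) = {Y(f),g} + {f,Y(g)} for all polynomials f,g ∈ ℝ[x₀,x₁,x₂,x₃]. Then there exist a polynomial h ∈ ℝ[x₀,x₁,x₂,x₃] and real constants a, b such that Y₀ = −x₁∂₁h − x₃∂₃h + a, Y₁ = x₁∂₀h − x₃∂₂h, Y₂ = x₃∂₁h − x₁∂₃h + b, and Y₃ = x₃∂₀h + x₁∂₂h; that is, Y = X_h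 + a·∂₀ + b·∂₂. -/
open MvPolynomial

/-- The near-positive Poisson bracket on polynomials ℝ[x₀,x₁,x₂,x₃]. -/
noncomputable def polyNearPosBracket (f g : MvPolynomial (Fin 4) ℝ) :
    MvPolynomial (Fin 4) ℝ :=
  X 1 * (pderiv 0 f * pderiv 1 g - pderiv 1 f * pderiv 0 g
    + pderiv 2 f * pderiv 3 g - pderiv 3 f * pderiv 2 g)
  + X 3 * (pderiv 0 f * pderiv 3 g - pderiv 3 f * pderiv 0 g
    + pderiv 1 f * pderiv 2 g - pderiv 2 f * pderiv 1 g)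

/-- The action of a polynomial vector field `Y = Σ Yᵢ ∂ᵢ` on polynomials. -/
noncomputable def polyVF (Y : Fin 4 → MvPolynomial (Fin 4) ℝ)
    (f : MvPolynomial (Fin 4) ℝ) : MvPolynomial (Fin 4) ℝ :=
  ∑ i : Fin 4, Y i * pderiv i f

abbrev P4 := MvPolynomial (Fin 4) ℝ

local notation "e" i => Finsupp.single i (1:ℕ)

lemma sub_single_eq_iff {s d : Fin 4 →₀ ℕ} {i : Fin 4} (h : s i ≠ 0) :
    s - Finsupp.single i 1 = d ↔ s = d + Finsupp.single i 1 := by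
  constructor <;> intro hh <;> ext j <;>
    (have := Finsupp.ext_iff.1 hh j
     simp only [Finsupp.tsub_apply, Finsupp.add_apply, Finsupp.single_apply] at this ⊢) <;>
    by_cases hji : i = j <;> simp_all <;> omega

lemma coeff_pderiv (i : Fin 4) (d : Fin 4 →₀ ℕ) (f : P4) :
    coeff d (pderiv i f) = ((d i : ℝ) + 1) * coeff (d + Finsupp.single i 1) f := by
  induction f using MvPolynomial.induction_on' with
  | monomial s c =>
    rw [pderiv_monomial]
    rcases Nat.eq_zero_or_pos (s i) with hs | hs
    · have : ¬ s = d + Finsupp.single i 1 := by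
        intro hh; rw [hh] at hs; simp at hs
      simp [coeff_monomial, hs, this]
    · have hiff := sub_single_eq_iff (i := i) (d := d) (Nat.pos_iff_ne_zero.1 hs)
      simp only [coeff_monomial]
      split_ifs with h1 h2 h2
      · have : s i = d i + 1 := by
          rw [h2] at hs ⊢; simp
        rw [this]; push_cast; ring
      · exact absurd (hiff.1 h1) h2
      · exact absurd (hiff.2 h2) h1
      · ring
  | add p q hp hq => simp [map_add, coeff_add, hp, hq]; ring

noncomputable def pr (m : ℕ) (f : P4) : P4 :=
  Finsupp.sum (AddMonoidAlgebra.coeff f) fun d c => if d 1 + d 3 = m then monomial d c else 0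

noncomputable def gr (f : P4) : P4 :=
  Finsupp.sum (AddMonoidAlgebra.coeff f) fun d c => (((d 1 + d 3 : ℕ) : ℝ))⁻¹ • monomial d c

noncomputable def integ (i : Fin 4) (f : P4) : P4 :=
  Finsupp.sum (AddMonoidAlgebra.coeff f) fun d c => (((d i : ℕ) + 1 : ℝ))⁻¹ • monomial (d + Finsupp.single i 1) c

lemma pr_monomial (m : ℕ) (d : Fin 4 →₀ ℕ) (c : ℝ) :
    pr m (monomial d c) = if d 1 + d 3 = m then monomial d c else 0 := by
  rw [pr, sum_monomial_eq]; simp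

lemma gr_monomial (d : Fin 4 →₀ ℕ) (c : ℝ) :
    gr (monomial d c) = (((d 1 + d 3 : ℕ) : ℝ))⁻¹ • monomial d c := by
  rw [gr, sum_monomial_eq]; simp

lemma integ_monomial (i : Fin 4) (d : Fin 4 →₀ ℕ) (c : ℝ) :
    integ i (monomial d c)
      = (((d i : ℕ) + 1 : ℝ))⁻¹ • monomial (d + Finsupp.single i 1) c := by
  rw [integ, sum_monomial_eq]; simp

lemma pr_add (m : ℕ) (f g : P4) : pr m (f + g) = pr m f + pr m g := by
  unfold pr
  rw [AddMonoidAlgebra.coeff_add, Finsupp.sum_add_index']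
  · intro d; simp
  · intro d c1 c2; split_ifs <;> simp [map_add]

lemma gr_add (f g : P4) : gr (f + g) = gr f + gr g := by
  unfold gr
  rw [AddMonoidAlgebra.coeff_add, Finsupp.sum_add_index']
  · intro d; simp
  · intro d c1 c2; simp [map_add, smul_add]

lemma integ_add (i : Fin 4) (f g : P4) : integ i (f + g) = integ i f + integ i g := by
  unfold integ
  rw [AddMonoidAlgebra.coeff_add, Finsupp.sum_add_index']
  · intro d; simp
  · intro d c1 c2; simp [map_add, smul_add]

lemma coeff_pr (m : ℕ) (d : Fin 4 →₀ ℕ) (f : P4) :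
    coeff d (pr m f) = if d 1 + d 3 = m then coeff d f else 0 := by
  induction f using MvPolynomial.induction_on' with
  | monomial s c =>
    rw [pr_monomial]
    by_cases h2 : s = d
    · subst h2; split_ifs <;> simp_all [coeff_monomial]
    · split_ifs <;> simp [coeff_monomial, h2]
  | add p q hp hq => rw [pr_add]; simp only [coeff_add, hp, hq]; split_ifs <;> simp

lemma coeff_gr (d : Fin 4 →₀ ℕ) (f : P4) :
    coeff d (gr f) = (((d 1 + d 3 : ℕ) : ℝ))⁻¹ * coeff d f := by
  induction f using MvPolynomial.induction_on' with
  | monomial s c =>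
    rw [gr_monomial]
    simp only [coeff_smul, coeff_monomial, smul_eq_mul]
    split_ifs with h1
    · subst h1; rfl
    · ring
  | add p q hp hq => rw [gr_add]; simp [coeff_add, hp, hq]; ring

lemma pderiv_comm (i j : Fin 4) (f : P4) :
    pderiv i (pderiv j f) = pderiv j (pderiv i f) := by
  ext d
  simp only [coeff_pderiv, Finsupp.add_apply, Finsupp.single_apply]
  rw [add_right_comm d (Finsupp.single j 1) (Finsupp.single i 1)]
  rcases eq_or_ne i j with h | h
  · subst h; ring
  · simp [h, Ne.symm h]; ring

lemma sub_add_single (d : Fin 4 →₀ ℕ) (i : Fin 4) (h : d i ≠ 0) :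
    d - Finsupp.single i 1 + Finsupp.single i 1 = d := by
  ext j
  simp only [Finsupp.add_apply, Finsupp.tsub_apply, Finsupp.single_apply]
  split_ifs with hj
  · subst hj; omega
  · omega

lemma coeff_X_mul_pderiv (i j : Fin 4) (d : Fin 4 →₀ ℕ) (f : P4) :
    coeff d (X i * pderiv j f)
      = if d i = 0 then 0
        else (((d - Finsupp.single i 1 : Fin 4 →₀ ℕ) j : ℝ) + 1)
          * coeff (d - Finsupp.single i 1 + Finsupp.single j 1) f := by
  classical
  rw [coeff_X_mul']
  simp only [Finsupp.mem_support_iff]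
  rcases eq_or_ne (d i) 0 with h | h
  · simp [h]
  · simp [h, coeff_pderiv]

noncomputable def opA (f : P4) : P4 := X 1 * pderiv 0 f - X 3 * pderiv 2 f
noncomputable def opB (f : P4) : P4 := X 3 * pderiv 0 f + X 1 * pderiv 2 f
noncomputable def opE (f : P4) : P4 := X 1 * pderiv 1 f + X 3 * pderiv 3 f
noncomputable def opR (f : P4) : P4 := X 1 * pderiv 3 f - X 3 * pderiv 1 f

lemma apply_sub (d : Fin 4 →₀ ℕ) (i k : Fin 4) :
    (d - Finsupp.single i 1 : Fin 4 →₀ ℕ) k = d k - (if i = k then 1 else 0) := by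
  simp [Finsupp.tsub_apply, Finsupp.single_apply]

lemma apply_sub_add (d : Fin 4 →₀ ℕ) (i j k : Fin 4) :
    (d - Finsupp.single i 1 + Finsupp.single j 1 : Fin 4 →₀ ℕ) k
      = d k - (if i = k then 1 else 0) + (if j = k then 1 else 0) := by
  simp [Finsupp.add_apply, Finsupp.tsub_apply, Finsupp.single_apply]

lemma coeff_opE (d : Fin 4 →₀ ℕ) (f : P4) :
    coeff d (opE f) = ((d 1 + d 3 : ℕ) : ℝ) * coeff d f := by
  rw [opE, coeff_add, coeff_X_mul_pderiv, coeff_X_mul_pderiv]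
  rcases eq_or_ne (d 1) 0 with h1 | h1 <;> rcases eq_or_ne (d 3) 0 with h3 | h3
  · simp [h1, h3]
  · rw [if_pos h1, if_neg h3, sub_add_single d 3 h3, apply_sub]
    simp only [show ¬ (3 : Fin 4) = 1 by decide, if_false, h1]
    rw [if_pos trivial, Nat.cast_sub (by omega : 1 ≤ d 3)]
    push_cast [h1]; ring
  · rw [if_neg h1, if_pos h3, sub_add_single d 1 h1, apply_sub]
    simp only [show ¬ (1 : Fin 4) = 3 by decide, if_false, h3]
    rw [if_pos trivial, Nat.cast_sub (by omega : 1 ≤ d 1)]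
    push_cast [h3]; ring
  · rw [if_neg h1, if_neg h3, sub_add_single d 1 h1, sub_add_single d 3 h3,
      apply_sub, apply_sub]
    simp only [show ¬ (1 : Fin 4) = 3 by decide, show ¬ (3 : Fin 4) = 1 by decide, if_false,
      Nat.sub_zero]
    rw [if_pos trivial, Nat.cast_sub (by omega : 1 ≤ d 1),
      Nat.cast_sub (by omega : 1 ≤ d 3)]
    push_cast; ring

lemma pr_zero (m : ℕ) : pr m 0 = 0 := by unfold pr; simp [Finsupp.sum_zero_index]
lemma gr_zero : gr 0 = 0 := by unfold gr; simp [Finsupp.sum_zero_index]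
lemma integ_zero (i : Fin 4) : integ i 0 = 0 := by unfold integ; simp [Finsupp.sum_zero_index]

lemma pr_neg (m : ℕ) (f : P4) : pr m (-f) = -pr m f := by
  have := pr_add m f (-f); rw [add_neg_cancel, pr_zero] at this; exact eq_neg_of_add_eq_zero_right this.symm

lemma pr_sub (m : ℕ) (f g : P4) : pr m (f - g) = pr m f - pr m g := by
  rw [sub_eq_add_neg, pr_add, pr_neg]; ring

lemma gr_neg (f : P4) : gr (-f) = -gr f := by
  have := gr_add f (-f); rw [add_neg_cancel, gr_zero] at this; exact eq_neg_of_add_eq_zero_right this.symm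

lemma gr_sub (f g : P4) : gr (f - g) = gr f - gr g := by
  rw [sub_eq_add_neg, gr_add, gr_neg]; ring

lemma integ_sub (i : Fin 4) (f g : P4) : integ i (f - g) = integ i f - integ i g := by
  have h := integ_add i g (f - g); rw [add_sub_cancel] at h; rw [h]; ring

lemma opE_gr (f : P4) : opE (gr f) = f - pr 0 f := by
  ext d
  rw [coeff_opE, coeff_gr, coeff_sub, coeff_pr]
  rcases eq_or_ne (d 1 + d 3) 0 with h | h
  · simp [h]
  · rw [if_neg h, sub_zero, ← mul_assoc,
      mul_inv_cancel₀ (by exact_mod_cast h : ((d 1 + d 3 : ℕ) : ℝ) ≠ 0), one_mul]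

lemma gr_opE (f : P4) : gr (opE f) = f - pr 0 f := by
  ext d
  rw [coeff_gr, coeff_opE, coeff_sub, coeff_pr]
  rcases eq_or_ne (d 1 + d 3) 0 with h | h
  · simp [h]
  · rw [if_neg h, sub_zero,
      inv_mul_cancel_left₀ (by exact_mod_cast h : ((d 1 + d 3 : ℕ) : ℝ) ≠ 0)]

lemma pr1_opE (f : P4) : pr 1 (opE f) = pr 1 f := by
  ext d
  rw [coeff_pr, coeff_pr, coeff_opE]
  split_ifs with h
  · rw [h]; push_cast; ring
  · rfl

lemma opE_pr1 (f : P4) : opE (pr 1 f) = pr 1 f := by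
  ext d
  rw [coeff_opE, coeff_pr]
  split_ifs with h
  · rw [h]; push_cast; ring
  · ring

lemma pr0_gr (f : P4) : pr 0 (gr f) = 0 := by
  ext d
  rw [coeff_pr, coeff_zero]
  split_ifs with h
  · rw [coeff_gr, h]; simp
  · rfl

lemma eq_pr1_of_opE_eq {f : P4} (h : opE f = f) : f = pr 1 f := by
  ext d
  rw [coeff_pr]
  split_ifs with h1
  · rfl
  · have h2 := congrArg (coeff d) h
    rw [coeff_opE] at h2
    have h3 : (((d 1 + d 3 : ℕ) : ℝ) - 1) * coeff d f = 0 := by linarith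
    rcases mul_eq_zero.1 h3 with h4 | h4
    · exfalso
      apply h1
      have : ((d 1 + d 3 : ℕ) : ℝ) = ((1 : ℕ) : ℝ) := by push_cast at h4 ⊢; linarith
      exact_mod_cast this
    · exact h4

lemma pderiv_pr0 (i : Fin 4) (hi : i = 1 ∨ i = 3) (f : P4) : pderiv i (pr 0 f) = 0 := by
  ext d
  rw [coeff_pderiv, coeff_pr, coeff_zero]
  rw [if_neg]
  · ring
  · rcases hi with h | h <;> subst h <;>
      simp [Finsupp.add_apply, Finsupp.single_apply]

lemma pr0_of_pderiv {f : P4} (h1 : pderiv 1 f = 0) (h3 : pderiv 3 f = 0) : pr 0 f = f := by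
  ext d
  rw [coeff_pr]
  split_ifs with h
  · rfl
  · rcases Nat.eq_zero_or_pos (d 1) with hd | hd
    · have hd3 : d 3 ≠ 0 := by omega
      have := congrArg (coeff (d - Finsupp.single 3 1)) h3
      rw [coeff_pderiv, coeff_zero, sub_add_single d 3 hd3, apply_sub] at this
      rcases mul_eq_zero.1 this with h4 | h4
      · exfalso; revert h4; positivity
      · exact h4.symm
    · have hd1 : d 1 ≠ 0 := by omega
      have := congrArg (coeff (d - Finsupp.single 1 1)) h1
      rw [coeff_pderiv, coeff_zero, sub_add_single d 1 hd1, apply_sub] at this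
      rcases mul_eq_zero.1 this with h4 | h4
      · exfalso; revert h4; positivity
      · exact h4.symm

lemma pr_opA (m : ℕ) (f : P4) : pr (m + 1) (opA f) = opA (pr m f) := by
  ext d
  simp only [opA, coeff_sub, coeff_pr, coeff_X_mul_pderiv, apply_sub_add, apply_sub]
  simp only [Fin.isValue, show ((1:Fin 4) = 1) = True by simp, show ((3:Fin 4) = 1) = False by simp,
    show ((1:Fin 4) = 3) = False by simp, show ((3:Fin 4) = 3) = True by simp,
    show ((1:Fin 4) = 0) = False by simp, show ((3:Fin 4) = 0) = False by simp,
    show ((1:Fin 4) = 2) = False by simp, show ((3:Fin 4) = 2) = False by simp,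
    show ((0:Fin 4) = 1) = False by simp, show ((0:Fin 4) = 3) = False by simp,
    show ((2:Fin 4) = 1) = False by simp, show ((2:Fin 4) = 3) = False by simp,
    if_true, if_false, Nat.sub_zero, Nat.add_zero, Nat.zero_add]
  split_ifs <;> first | (exfalso; omega) | ring

lemma pr_opB (m : ℕ) (f : P4) : pr (m + 1) (opB f) = opB (pr m f) := by
  ext d
  simp only [opB, coeff_add, coeff_pr, coeff_X_mul_pderiv, apply_sub_add, apply_sub]
  simp only [Fin.isValue, show ((1:Fin 4) = 1) = True by simp, show ((3:Fin 4) = 1) = False by simp,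
    show ((1:Fin 4) = 3) = False by simp, show ((3:Fin 4) = 3) = True by simp,
    show ((1:Fin 4) = 0) = False by simp, show ((3:Fin 4) = 0) = False by simp,
    show ((1:Fin 4) = 2) = False by simp, show ((3:Fin 4) = 2) = False by simp,
    show ((0:Fin 4) = 1) = False by simp, show ((0:Fin 4) = 3) = False by simp,
    show ((2:Fin 4) = 1) = False by simp, show ((2:Fin 4) = 3) = False by simp,
    if_true, if_false, Nat.sub_zero, Nat.add_zero, Nat.zero_add]
  split_ifs <;> first | (exfalso; omega) | ring

lemma pr_opR (m : ℕ) (f : P4) : pr m (opR f) = opR (pr m f) := by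
  ext d
  simp only [opR, coeff_sub, coeff_pr, coeff_X_mul_pderiv, apply_sub_add, apply_sub]
  simp only [Fin.isValue, show ((1:Fin 4) = 1) = True by simp, show ((3:Fin 4) = 1) = False by simp,
    show ((1:Fin 4) = 3) = False by simp, show ((3:Fin 4) = 3) = True by simp,
    show ((1:Fin 4) = 0) = False by simp, show ((3:Fin 4) = 0) = False by simp,
    show ((1:Fin 4) = 2) = False by simp, show ((3:Fin 4) = 2) = False by simp,
    show ((0:Fin 4) = 1) = False by simp, show ((0:Fin 4) = 3) = False by simp,
    show ((2:Fin 4) = 1) = False by simp, show ((2:Fin 4) = 3) = False by simp,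
    if_true, if_false, Nat.sub_zero, Nat.add_zero, Nat.zero_add]
  split_ifs <;> first | (exfalso; omega) | ring

lemma opE_opA (f : P4) : opE (opA f) = opA (opE f) + opA f := by
  simp only [opE, opA, pderiv_mul, map_sub, map_add, pderiv_X_self,
    pderiv_X_of_ne (show (1:Fin 4) ≠ 0 by decide), pderiv_X_of_ne (show (1:Fin 4) ≠ 2 by decide),
    pderiv_X_of_ne (show (1:Fin 4) ≠ 3 by decide), pderiv_X_of_ne (show (3:Fin 4) ≠ 0 by decide),
    pderiv_X_of_ne (show (3:Fin 4) ≠ 2 by decide), pderiv_X_of_ne (show (3:Fin 4) ≠ 1 by decide),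
    pderiv_X_of_ne (show (0:Fin 4) ≠ 1 by decide), pderiv_X_of_ne (show (0:Fin 4) ≠ 3 by decide),
    pderiv_X_of_ne (show (2:Fin 4) ≠ 1 by decide), pderiv_X_of_ne (show (2:Fin 4) ≠ 3 by decide)]
  rw [pderiv_comm 1 0 f, pderiv_comm 1 2 f, pderiv_comm 3 0 f, pderiv_comm 3 2 f]
  ring

lemma opE_opB (f : P4) : opE (opB f) = opB (opE f) + opB f := by
  simp only [opE, opB, pderiv_mul, map_sub, map_add, pderiv_X_self,
    pderiv_X_of_ne (show (1:Fin 4) ≠ 0 by decide), pderiv_X_of_ne (show (1:Fin 4) ≠ 2 by decide),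
    pderiv_X_of_ne (show (1:Fin 4) ≠ 3 by decide), pderiv_X_of_ne (show (3:Fin 4) ≠ 0 by decide),
    pderiv_X_of_ne (show (3:Fin 4) ≠ 2 by decide), pderiv_X_of_ne (show (3:Fin 4) ≠ 1 by decide),
    pderiv_X_of_ne (show (0:Fin 4) ≠ 1 by decide), pderiv_X_of_ne (show (0:Fin 4) ≠ 3 by decide),
    pderiv_X_of_ne (show (2:Fin 4) ≠ 1 by decide), pderiv_X_of_ne (show (2:Fin 4) ≠ 3 by decide)]
  rw [pderiv_comm 1 0 f, pderiv_comm 1 2 f, pderiv_comm 3 0 f, pderiv_comm 3 2 f]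
  ring

lemma opE_opR (f : P4) : opE (opR f) = opR (opE f) := by
  simp only [opE, opR, pderiv_mul, map_sub, map_add, pderiv_X_self,
    pderiv_X_of_ne (show (1:Fin 4) ≠ 3 by decide), pderiv_X_of_ne (show (3:Fin 4) ≠ 1 by decide)]
  rw [pderiv_comm 1 3 f, pderiv_comm 1 1 f, pderiv_comm 3 3 f]
  ring

lemma pr0_of_opE_eq_zero {f : P4} (h : opE f = 0) : pr 0 f = f := by
  ext d
  rw [coeff_pr]
  split_ifs with h1
  · rfl
  · have h2 := congrArg (coeff d) h
    rw [coeff_opE, coeff_zero] at h2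
    rcases mul_eq_zero.1 h2 with h4 | h4
    · exfalso; apply h1; exact_mod_cast h4
    · exact h4.symm

lemma pderiv_integ_self (i : Fin 4) (f : P4) : pderiv i (integ i f) = f := by
  induction f using MvPolynomial.induction_on' with
  | monomial d c =>
    rw [integ_monomial, Derivation.map_smul, pderiv_monomial, add_tsub_cancel_right]
    have hap : (d + Finsupp.single i 1 : Fin 4 →₀ ℕ) i = d i + 1 := by
      simp [Finsupp.add_apply]
    rw [hap, smul_monomial]
    congr 1
    have : ((d i : ℝ) + 1) ≠ 0 := by positivity
    push_cast
    field_simp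
    rw [smul_eq_mul, one_div, inv_mul_cancel_left₀ this]
  | add p q hp hq => rw [integ_add, map_add, hp, hq]

lemma pderiv_integ_ne {i j : Fin 4} (hij : j ≠ i) (f : P4) :
    pderiv j (integ i f) = integ i (pderiv j f) := by
  induction f using MvPolynomial.induction_on' with
  | monomial d c =>
    rw [integ_monomial, Derivation.map_smul, pderiv_monomial, pderiv_monomial, integ_monomial]
    have h1 : (d + Finsupp.single i 1 : Fin 4 →₀ ℕ) j = d j := by
      simp [Finsupp.add_apply, Finsupp.single_apply, Ne.symm hij]
    have h2 : (d - Finsupp.single j 1 : Fin 4 →₀ ℕ) i = d i := by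
      simp [Finsupp.tsub_apply, Finsupp.single_apply, hij]
    have h3 : (d + Finsupp.single i 1 - Finsupp.single j 1 : Fin 4 →₀ ℕ)
        = d - Finsupp.single j 1 + Finsupp.single i 1 := by
      ext k
      simp only [Finsupp.add_apply, Finsupp.tsub_apply, Finsupp.single_apply]
      split_ifs <;> omega
    rw [h1, h2, h3]
  | add p q hp hq => rw [integ_add, map_add, map_add, hp, hq, integ_add]

lemma eq_C_of_pderiv {f : P4} (h : ∀ i, pderiv i f = 0) : f = C (coeff 0 f) := by
  ext d
  rw [coeff_C]
  split_ifs with h1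
  · rw [← h1]
  · have h2 : ∃ i, d i ≠ 0 := by
      by_contra hc
      push_neg at hc
      have hd : d = 0 := by ext i; simp [hc i]
      simp [hd] at h1
    obtain ⟨i, hi⟩ := h2
    have h3 := congrArg (coeff (d - Finsupp.single i 1)) (h i)
    rw [coeff_pderiv, coeff_zero, sub_add_single d i hi] at h3
    rcases mul_eq_zero.1 h3 with h4 | h4
    · exfalso; revert h4; positivity
    · exact h4

lemma X_sq_cancel {w : P4} (h : (X 1 ^ 2 + X 3 ^ 2) * w = 0) : w = 0 := by
  rcases mul_eq_zero.1 h with h1 | h1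
  · exfalso
    have h2 := congrArg (coeff (Finsupp.single 1 2)) h1
    rw [coeff_add, coeff_zero, X_pow_eq_monomial, X_pow_eq_monomial,
      coeff_monomial, coeff_monomial] at h2
    rw [if_pos rfl, if_neg] at h2
    · norm_num at h2
    · intro hc
      have := congrArg (fun g : Fin 4 →₀ ℕ => g 3) hc
      simp [Finsupp.single_apply] at this
  · exact h1

lemma opE_sub (f g : P4) : opE (f - g) = opE f - opE g := by simp [opE]; ring
lemma opE_add (f g : P4) : opE (f + g) = opE f + opE g := by simp [opE]; ring
lemma opA_sub (f g : P4) : opA (f - g) = opA f - opA g := by simp [opA]; ring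
lemma opB_sub (f g : P4) : opB (f - g) = opB f - opB g := by simp [opB]; ring
lemma opR_sub (f g : P4) : opR (f - g) = opR f - opR g := by simp [opR]; ring
lemma opA_C (a : ℝ) : opA (C a) = 0 := by simp [opA]
lemma opB_C (a : ℝ) : opB (C a) = 0 := by simp [opB]
lemma opR_C (a : ℝ) : opR (C a) = 0 := by simp [opR]
lemma opA_neg (f : P4) : opA (-f) = -opA f := by simp [opA]; ring
lemma opB_neg (f : P4) : opB (-f) = -opB f := by simp [opB]; ring
lemma opR_neg (f : P4) : opR (-f) = -opR f := by simp [opR]; ring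
lemma opE_of {f : P4} (h1 : pderiv 1 f = 0) (h3 : pderiv 3 f = 0) : opE f = 0 := by
  simp [opE, h1, h3]
lemma opR_of {f : P4} (h1 : pderiv 1 f = 0) (h3 : pderiv 3 f = 0) : opR f = 0 := by
  simp [opR, h1, h3]

lemma opR_comb {p q : P4} (hp1 : pderiv 1 p = 0) (hp3 : pderiv 3 p = 0)
    (hq1 : pderiv 1 q = 0) (hq3 : pderiv 3 q = 0) :
    opR (X 1 * p - X 3 * q) = -(X 3 * p + X 1 * q) := by
  simp only [opR, map_sub, pderiv_mul, pderiv_X_self,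
    pderiv_X_of_ne (show (1:Fin 4) ≠ 3 by decide), pderiv_X_of_ne (show (3:Fin 4) ≠ 1 by decide),
    hp1, hp3, hq1, hq3]
  ring

lemma opR_comb' {p q : P4} (hp1 : pderiv 1 p = 0) (hp3 : pderiv 3 p = 0)
    (hq1 : pderiv 1 q = 0) (hq3 : pderiv 3 q = 0) :
    opR (X 3 * p + X 1 * q) = X 1 * p - X 3 * q := by
  simp only [opR, map_add, pderiv_mul, pderiv_X_self,
    pderiv_X_of_ne (show (1:Fin 4) ≠ 3 by decide), pderiv_X_of_ne (show (3:Fin 4) ≠ 1 by decide),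
    hp1, hp3, hq1, hq3]
  ring

lemma opAB_comb (p q : P4) : opB (X 1 * p - X 3 * q) - opA (X 3 * p + X 1 * q)
    = (X 1 ^ 2 + X 3 ^ 2) * (pderiv 2 p - pderiv 0 q) := by
  simp only [opA, opB, map_add, map_sub, pderiv_mul, pderiv_X_self,
    pderiv_X_of_ne (show (1:Fin 4) ≠ 0 by decide), pderiv_X_of_ne (show (3:Fin 4) ≠ 0 by decide),
    pderiv_X_of_ne (show (1:Fin 4) ≠ 2 by decide), pderiv_X_of_ne (show (3:Fin 4) ≠ 2 by decide)]
  ring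

lemma opR_opA_of {v : P4} (h1 : pderiv 1 v = 0) (h3 : pderiv 3 v = 0) :
    opR (opA v) = -opB v := by
  have hc := opR_comb (p := pderiv 0 v) (q := pderiv 2 v)
    (by rw [pderiv_comm 1 0, h1, map_zero]) (by rw [pderiv_comm 3 0, h3, map_zero])
    (by rw [pderiv_comm 1 2, h1, map_zero]) (by rw [pderiv_comm 3 2, h3, map_zero])
  rw [opA, hc, opB]

lemma pderiv_pderiv_pr1 {i j : Fin 4} (hi : i = 1 ∨ i = 3) (hj : j = 1 ∨ j = 3) (f : P4) :
    pderiv i (pderiv j (pr 1 f)) = 0 := by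
  ext d
  rw [coeff_pderiv, coeff_pderiv, coeff_pr, coeff_zero]
  rw [if_neg]
  · ring
  · rcases hi with rfl | rfl <;> rcases hj with rfl | rfl <;>
      simp [Finsupp.add_apply, Finsupp.single_apply] <;> omega

lemma opA_zero_of {u : P4} (h : opA u = 0) (h1 : pderiv 1 u = 0) (h3 : pderiv 3 u = 0) :
    pderiv 0 u = 0 ∧ pderiv 2 u = 0 := by
  constructor
  · have hd := congrArg (pderiv 1) h
    rw [opA] at hd
    simp only [map_zero, map_sub, pderiv_mul, pderiv_X_self,
      pderiv_X_of_ne (show (3:Fin 4) ≠ 1 by decide), pderiv_comm 1 0, pderiv_comm 1 2,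
      h1, map_zero] at hd
    simpa using hd
  · have hd := congrArg (pderiv 3) h
    rw [opA] at hd
    simp only [map_zero, map_sub, pderiv_mul, pderiv_X_self,
      pderiv_X_of_ne (show (1:Fin 4) ≠ 3 by decide), pderiv_comm 3 0, pderiv_comm 3 2,
      h3, map_zero] at hd
    simpa using hd

lemma opB_zero_of {u : P4} (h : opB u = 0) (h1 : pderiv 1 u = 0) (h3 : pderiv 3 u = 0) :
    pderiv 0 u = 0 ∧ pderiv 2 u = 0 := by
  constructor
  · have hd := congrArg (pderiv 3) h
    rw [opB] at hd
    simp only [map_zero, map_add, pderiv_mul, pderiv_X_self,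
      pderiv_X_of_ne (show (1:Fin 4) ≠ 3 by decide), pderiv_comm 3 0, pderiv_comm 3 2,
      h3, map_zero] at hd
    simpa using hd
  · have hd := congrArg (pderiv 1) h
    rw [opB] at hd
    simp only [map_zero, map_add, pderiv_mul, pderiv_X_self,
      pderiv_X_of_ne (show (3:Fin 4) ≠ 1 by decide), pderiv_comm 1 0, pderiv_comm 1 2,
      h1, map_zero] at hd
    simpa using hd

lemma polyVF_X (Y : Fin 4 → P4) (j : Fin 4) : polyVF Y (X j) = Y j := by
  fin_cases j <;> simp [polyVF, Fin.sum_univ_four, pderiv_X, Pi.single_apply]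

lemma polyVF_zero (Y : Fin 4 → P4) : polyVF Y 0 = 0 := by simp [polyVF]

lemma brL0 (g : P4) : polyNearPosBracket (X 0) g = opE g := by
  simp only [polyNearPosBracket, opE, pderiv_X_self,
    pderiv_X_of_ne (show (0:Fin 4) ≠ 1 by decide), pderiv_X_of_ne (show (0:Fin 4) ≠ 2 by decide),
    pderiv_X_of_ne (show (0:Fin 4) ≠ 3 by decide)]
  ring

lemma brL1 (g : P4) : polyNearPosBracket (X 1) g = -opA g := by
  simp only [polyNearPosBracket, opA, pderiv_X_self,
    pderiv_X_of_ne (show (1:Fin 4) ≠ 0 by decide), pderiv_X_of_ne (show (1:Fin 4) ≠ 2 by decide),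
    pderiv_X_of_ne (show (1:Fin 4) ≠ 3 by decide)]
  ring

lemma brL2 (g : P4) : polyNearPosBracket (X 2) g = opR g := by
  simp only [polyNearPosBracket, opR, pderiv_X_self,
    pderiv_X_of_ne (show (2:Fin 4) ≠ 0 by decide), pderiv_X_of_ne (show (2:Fin 4) ≠ 1 by decide),
    pderiv_X_of_ne (show (2:Fin 4) ≠ 3 by decide)]
  ring

lemma brR1 (f : P4) : polyNearPosBracket f (X 1) = opA f := by
  simp only [polyNearPosBracket, opA, pderiv_X_self,
    pderiv_X_of_ne (show (1:Fin 4) ≠ 0 by decide), pderiv_X_of_ne (show (1:Fin 4) ≠ 2 by decide),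
    pderiv_X_of_ne (show (1:Fin 4) ≠ 3 by decide)]
  ring

lemma brR2 (f : P4) : polyNearPosBracket f (X 2) = -opR f := by
  simp only [polyNearPosBracket, opR, pderiv_X_self,
    pderiv_X_of_ne (show (2:Fin 4) ≠ 0 by decide), pderiv_X_of_ne (show (2:Fin 4) ≠ 1 by decide),
    pderiv_X_of_ne (show (2:Fin 4) ≠ 3 by decide)]
  ring

lemma brR3 (f : P4) : polyNearPosBracket f (X 3) = opB f := by
  simp only [polyNearPosBracket, opB, pderiv_X_self,
    pderiv_X_of_ne (show (3:Fin 4) ≠ 0 by decide), pderiv_X_of_ne (show (3:Fin 4) ≠ 1 by decide),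
    pderiv_X_of_ne (show (3:Fin 4) ≠ 2 by decide)]
  ring

lemma brc01 : polyNearPosBracket (X 0) (X 1) = X 1 := by
  rw [brL0, opE, pderiv_X_self, pderiv_X_of_ne (show (1:Fin 4) ≠ 3 by decide)]; ring
lemma brc03 : polyNearPosBracket (X 0) (X 3) = X 3 := by
  rw [brL0, opE, pderiv_X_self, pderiv_X_of_ne (show (3:Fin 4) ≠ 1 by decide)]; ring
lemma brc02 : polyNearPosBracket (X 0) (X 2) = 0 := by
  rw [brL0, opE, pderiv_X_of_ne (show (2:Fin 4) ≠ 1 by decide),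
    pderiv_X_of_ne (show (2:Fin 4) ≠ 3 by decide)]; ring
lemma brc12 : polyNearPosBracket (X 1) (X 2) = X 3 := by
  rw [brL1, opA, pderiv_X_of_ne (show (2:Fin 4) ≠ 0 by decide), pderiv_X_self]; ring
lemma brc23 : polyNearPosBracket (X 2) (X 3) = X 1 := by
  rw [brL2, opR, pderiv_X_self, pderiv_X_of_ne (show (3:Fin 4) ≠ 1 by decide)]; ring
lemma brc13 : polyNearPosBracket (X 1) (X 3) = 0 := by
  rw [brL1, opA, pderiv_X_of_ne (show (3:Fin 4) ≠ 0 by decide),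
    pderiv_X_of_ne (show (3:Fin 4) ≠ 2 by decide)]; ring

/-- Every polynomial Poisson vector field of the near-positive structure is a
Hamiltonian vector field plus a constant combination `a·∂₀ + b·∂₂`:
the first formal Poisson cohomology is spanned by `∂₀` and `∂₂`. -/
theorem nearPos_formal_H1 (Y : Fin 4 → MvPolynomial (Fin 4) ℝ)
    (hY : ∀ f g : MvPolynomial (Fin 4) ℝ,
      polyVF Y (polyNearPosBracket f g)
        = polyNearPosBracket (polyVF Y f) g + polyNearPosBracket f (polyVF Y g)) :
    ∃ (h : MvPolynomial (Fin 4) ℝ) (a b : ℝ),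
      Y 0 = -X 1 * pderiv 1 h - X 3 * pderiv 3 h + C a
      ∧ Y 1 = X 1 * pderiv 0 h - X 3 * pderiv 2 h
      ∧ Y 2 = X 3 * pderiv 1 h - X 1 * pderiv 3 h + C b
      ∧ Y 3 = X 3 * pderiv 0 h + X 1 * pderiv 2 h := by
  -- the six structure equations
  have eq01 : Y 1 = opA (Y 0) + opE (Y 1) := by
    have h := hY (X 0) (X 1)
    rw [brc01] at h
    simp only [polyVF_X, brR1, brL0] at h
    exact h
  have eq03 : Y 3 = opB (Y 0) + opE (Y 3) := by
    have h := hY (X 0) (X 3)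
    rw [brc03] at h
    simp only [polyVF_X, brR3, brL0] at h
    exact h
  have eq02 : (0 : P4) = -opR (Y 0) + opE (Y 2) := by
    have h := hY (X 0) (X 2)
    rw [brc02, polyVF_zero] at h
    simp only [polyVF_X, brR2, brL0] at h
    exact h
  have eq12 : Y 3 = -opR (Y 1) + -opA (Y 2) := by
    have h := hY (X 1) (X 2)
    rw [brc12] at h
    simp only [polyVF_X, brR2, brL1] at h
    exact h
  have eq23 : Y 1 = opB (Y 2) + opR (Y 3) := by
    have h := hY (X 2) (X 3)
    rw [brc23] at h
    simp only [polyVF_X, brR3, brL2] at h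
    exact h
  have eq13 : (0 : P4) = opB (Y 1) + -opA (Y 3) := by
    have h := hY (X 1) (X 3)
    rw [brc13, polyVF_zero] at h
    simp only [polyVF_X, brR3, brL1] at h
    exact h
  -- the degree-zero part of Y 0 is constant
  have hu1 : pderiv 1 (pr 0 (Y 0)) = 0 := pderiv_pr0 1 (Or.inl rfl) _
  have hu3 : pderiv 3 (pr 0 (Y 0)) = 0 := pderiv_pr0 3 (Or.inr rfl) _
  have hAu : opA (pr 0 (Y 0)) = 0 := by
    have h := congrArg (pr 1) eq01
    rw [pr_add, pr1_opE, show pr 1 (opA (Y 0)) = opA (pr 0 (Y 0)) from by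
      simpa using pr_opA 0 (Y 0)] at h
    rw [add_comm] at h
    exact (left_eq_add).mp h
  obtain ⟨hu0, hu2⟩ := opA_zero_of hAu hu1 hu3
  have huC : pr 0 (Y 0) = C (coeff 0 (pr 0 (Y 0))) :=
    eq_C_of_pderiv (by intro i; fin_cases i <;> assumption)
  -- the first-degree component of Y 1
  set p := pderiv 1 (pr 1 (Y 1)) with hp
  set q := -pderiv 3 (pr 1 (Y 1)) with hq
  have hp1 : pderiv 1 p = 0 := pderiv_pderiv_pr1 (Or.inl rfl) (Or.inl rfl) _
  have hp3 : pderiv 3 p = 0 := pderiv_pderiv_pr1 (Or.inr rfl) (Or.inl rfl) _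
  have hq1 : pderiv 1 q = 0 := by
    rw [hq, map_neg, pderiv_pderiv_pr1 (Or.inl rfl) (Or.inr rfl), neg_zero]
  have hq3 : pderiv 3 q = 0 := by
    rw [hq, map_neg, pderiv_pderiv_pr1 (Or.inr rfl) (Or.inr rfl), neg_zero]
  have hpr1Y1 : pr 1 (Y 1) = X 1 * p - X 3 * q := by
    have h := (opE_pr1 (Y 1)).symm
    rw [opE] at h
    rw [hp, hq]
    linear_combination h
  -- the degree-zero part of Y 2 is constant
  have hv1 : pderiv 1 (pr 0 (Y 2)) = 0 := pderiv_pr0 1 (Or.inl rfl) _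
  have hv3 : pderiv 3 (pr 0 (Y 2)) = 0 := pderiv_pr0 3 (Or.inr rfl) _
  have hpr1Y3 : pr 1 (Y 3) = -opR (pr 1 (Y 1)) - opA (pr 0 (Y 2)) := by
    have h := congrArg (pr 1) eq12
    rw [pr_add, pr_neg, pr_neg, pr_opR 1, show pr 1 (opA (Y 2)) = opA (pr 0 (Y 2)) from by
      simpa using pr_opA 0 (Y 2)] at h
    linear_combination h
  have hRR : opR (opR (pr 1 (Y 1))) = -(pr 1 (Y 1)) := by
    rw [hpr1Y1, opR_comb hp1 hp3 hq1 hq3, opR_neg, opR_comb' hp1 hp3 hq1 hq3]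
  have hBv : opB (pr 0 (Y 2)) = 0 := by
    have h := congrArg (pr 1) eq23
    rw [pr_add, pr_opR 1, show pr 1 (opB (Y 2)) = opB (pr 0 (Y 2)) from by
      simpa using pr_opB 0 (Y 2)] at h
    rw [hpr1Y3, opR_sub, opR_neg, hRR, opR_opA_of hv1 hv3] at h
    have h2 : opB (pr 0 (Y 2)) + opB (pr 0 (Y 2)) = 0 := by linear_combination -h
    exact add_self_eq_zero.mp h2
  obtain ⟨hv0, hv2⟩ := opB_zero_of hBv hv1 hv3
  have hvC : pr 0 (Y 2) = C (coeff 0 (pr 0 (Y 2))) :=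
    eq_C_of_pderiv (by intro i; fin_cases i <;> assumption)
  have hpr1Y3' : pr 1 (Y 3) = X 3 * p + X 1 * q := by
    rw [hpr1Y3, hvC, opA_C, hpr1Y1, opR_comb hp1 hp3 hq1 hq3]
    ring
  -- integrability
  have hint : pderiv 2 p = pderiv 0 q := by
    have h := congrArg (pr 2) eq13
    rw [pr_zero, pr_add, pr_neg, show pr 2 (opB (Y 1)) = opB (pr 1 (Y 1)) from by
        simpa using pr_opB 1 (Y 1),
      show pr 2 (opA (Y 3)) = opA (pr 1 (Y 3)) from by simpa using pr_opA 1 (Y 3),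
      hpr1Y1, hpr1Y3'] at h
    have h3 : (X 1 ^ 2 + X 3 ^ 2) * (pderiv 2 p - pderiv 0 q) = 0 := by
      rw [← opAB_comb]
      linear_combination -h
    exact sub_eq_zero.mp (X_sq_cancel h3)
  -- the potential
  set r := q - pderiv 2 (integ 0 p) with hr
  set h0 := integ 0 p + integ 2 r with hh0
  set hh := h0 - gr (Y 0) with hhh
  have hip1 : pderiv 1 (integ 0 p) = 0 := by
    rw [pderiv_integ_ne (by decide : (1:Fin 4) ≠ 0), hp1, integ_zero]
  have hip3 : pderiv 3 (integ 0 p) = 0 := by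
    rw [pderiv_integ_ne (by decide : (3:Fin 4) ≠ 0), hp3, integ_zero]
  have hr1 : pderiv 1 r = 0 := by
    rw [hr, map_sub, hq1, pderiv_comm 1 2, hip1, map_zero, zero_sub, neg_zero]
  have hr3 : pderiv 3 r = 0 := by
    rw [hr, map_sub, hq3, pderiv_comm 3 2, hip3, map_zero, zero_sub, neg_zero]
  have hh01 : pderiv 1 h0 = 0 := by
    rw [hh0, map_add, hip1, pderiv_integ_ne (by decide : (1:Fin 4) ≠ 2), hr1, integ_zero,
      add_zero]
  have hh03 : pderiv 3 h0 = 0 := by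
    rw [hh0, map_add, hip3, pderiv_integ_ne (by decide : (3:Fin 4) ≠ 2), hr3, integ_zero,
      add_zero]
  have hd0h0 : pderiv 0 h0 = p := by
    rw [hh0, map_add, pderiv_integ_self, pderiv_integ_ne (by decide : (0:Fin 4) ≠ 2)]
    have hzr : pderiv 0 r = 0 := by
      rw [hr, map_sub, pderiv_comm 0 2, pderiv_integ_self, hint, sub_self]
    rw [hzr, integ_zero, add_zero]
  have hd2h0 : pderiv 2 h0 = q := by
    rw [hh0, map_add, pderiv_integ_self, hr]
    ring
  have hpr0hh : pr 0 hh = h0 := by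
    rw [hhh, pr_sub, pr0_gr, pr0_of_pderiv hh01 hh03, sub_zero]
  have hEh : opE hh = C (coeff 0 (pr 0 (Y 0))) - Y 0 := by
    rw [hhh, opE_sub, opE_of hh01 hh03, opE_gr, ← huC]
    ring
  refine ⟨hh, coeff 0 (pr 0 (Y 0)), coeff 0 (pr 0 (Y 2)), ?_, ?_, ?_, ?_⟩
  · have h := hEh
    rw [opE] at h
    linear_combination h
  · have hEd : opE (Y 1 - opA hh) = Y 1 - opA hh := by
      rw [opE_sub, opE_opA, hEh, opA_sub, opA_C]
      linear_combination -eq01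
    have hD := eq_pr1_of_opE_eq hEd
    have hz : pr 1 (Y 1 - opA hh) = 0 := by
      rw [pr_sub, hpr1Y1, show pr 1 (opA hh) = opA (pr 0 hh) from by simpa using pr_opA 0 hh,
        hpr0hh, opA, hd0h0, hd2h0]
      ring
    rw [hz] at hD
    have hT1 : Y 1 = opA hh := by linear_combination hD
    rw [opA] at hT1
    exact hT1
  · have hERh : opE (Y 2 + opR hh) = 0 := by
      rw [opE_add, opE_opR, hEh, opR_sub, opR_C]
      linear_combination -eq02
    have hg : Y 2 + opR hh = pr 0 (Y 2 + opR hh) := (pr0_of_opE_eq_zero hERh).symm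
    have hgb : pr 0 (Y 2 + opR hh) = C (coeff 0 (pr 0 (Y 2))) := by
      rw [pr_add, pr_opR 0, hpr0hh, opR_of hh01 hh03, add_zero, ← hvC]
    have hT2 : Y 2 + opR hh = C (coeff 0 (pr 0 (Y 2))) := hg.trans hgb
    rw [opR] at hT2
    linear_combination hT2
  · have hEd : opE (Y 3 - opB hh) = Y 3 - opB hh := by
      rw [opE_sub, opE_opB, hEh, opB_sub, opB_C]
      linear_combination -eq03
    have hD := eq_pr1_of_opE_eq hEd
    have hz : pr 1 (Y 3 - opB hh) = 0 := by
      rw [pr_sub, hpr1Y3', show pr 1 (opB hh) = opB (pr 0 hh) from by simpa using pr_opB 0 hh,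
        hpr0hh, opB, hd0h0, hd2h0]
      ring
    rw [hz] at hD
    have hT3 : Y 3 = opB hh := by linear_combination hD
    rw [opB] at hT3
    exact hT3
end

section
/- In the polynomial ring ℝ[x₁,x₂,x₃,x₄], the polynomials P¹ = x₁² − x₂² + x₃² − x₄² and P² = 2(x₁x₂ + x₃x₄) form a regular sequence: P¹ is not a zero divisor in ℝ[x₁,x₂,x₃,x₄], P² is not a zero divisor in the quotient ring ℝ[x₁,x₂,x₃,x₄]/⟨P¹⟩, and symmetrically P¹ is not a zero divisor in ℝ[x₁,x₂,x₃,x₄]/⟨P²⟩. Equivalently: for any g ∈ ℝ[x₁,x₂,x₃,x₄], if P²·g lies in the ideal generated by P¹ then g lies in the ideal generated by P¹, and if P¹·g lies in the ideal generated by P² then g lies in the ideal generated by P². -/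
/-!
Both Casimirs are prime in the UFD `ℝ[x₁,x₂,x₃,x₄]`, and neither divides the other, which gives
all four statements. As a polynomial in `x₁` over `ℝ[x₂,x₃,x₄]`, `P¹ = x₁² − a` where
`a = x₂² − x₃² + x₄²` takes the value `−1` at `(0,1,0)`, so it is not a square; by Gauss's lemma
`P¹` is irreducible. `P²` is the image of `P¹` under the linear change of variables
`x₁ ↦ x₁ + x₂/2, x₂ ↦ x₁ − x₂/2` (and likewise on `x₃, x₄`), which turns `x₁² − x₂²` into `2x₁x₂`.
-/

open MvPolynomial

theorem Polynomial.irreducible_X_pow_sub_C_of_forall_pow_ne {R : Type*} [CommRing R] [IsDomain R]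
    [IsIntegrallyClosed R] {p : ℕ} (hp : p.Prime) {a : R} (ha : ∀ r : R, r ^ p ≠ a) :
    Irreducible (X ^ p - C a) := by
  have hmonic : (X ^ p - C a).Monic := monic_X_pow_sub_C a hp.ne_zero
  rw [hmonic.irreducible_iff_irreducible_map_fraction_map (K := FractionRing R),
    Polynomial.map_sub, Polynomial.map_pow, map_X, map_C]
  refine X_pow_sub_C_irreducible_of_prime hp fun b hb => ?_
  have hb_integral : IsIntegral R b := ⟨_, hmonic, by simp [eval₂_sub, hb]⟩
  obtain ⟨r, rfl⟩ := IsIntegrallyClosed.isIntegral_iff.mp hb_integral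
  exact ha r (IsFractionRing.injective R (FractionRing R) (by rw [map_pow, hb]))

theorem Prime.mem_span_singleton_of_mul_mem {R : Type*} [CommSemiring R] {p q g : R}
    (hp : Prime p) (hpq : ¬ p ∣ q) (h : q * g ∈ Ideal.span {p}) : g ∈ Ideal.span {p} := by
  rw [Ideal.mem_span_singleton] at h ⊢
  exact (hp.dvd_or_dvd h).resolve_left hpq

namespace Lefschetz

noncomputable abbrev P₁ : MvPolynomial (Fin 4) ℝ := X 0 ^ 2 - X 1 ^ 2 + X 2 ^ 2 - X 3 ^ 2

noncomputable abbrev P₂ : MvPolynomial (Fin 4) ℝ := 2 * (X 0 * X 1 + X 2 * X 3)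

theorem sq_ne_X_sq_sub_X_sq_add_X_sq (r : MvPolynomial (Fin 3) ℝ) :
    r ^ 2 ≠ X 0 ^ 2 - X 1 ^ 2 + X 2 ^ 2 := by
  intro h
  have h_eval : eval ![0, 1, 0] r ^ 2 = -1 := by simpa using congrArg (eval ![0, 1, 0]) h
  nlinarith [sq_nonneg (eval ![0, 1, 0] r)]

theorem finSuccEquiv_P₁ :
    finSuccEquiv ℝ 3 P₁ = Polynomial.X ^ 2 - Polynomial.C (X 0 ^ 2 - X 1 ^ 2 + X 2 ^ 2) := by
  simp only [P₁, map_sub, map_add, map_pow, finSuccEquiv_X_zero,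
    show (1 : Fin 4) = Fin.succ 0 from rfl, show (2 : Fin 4) = Fin.succ 1 from rfl,
    show (3 : Fin 4) = Fin.succ 2 from rfl, finSuccEquiv_X_succ]
  ring

theorem prime_P₁ : Prime P₁ := by
  rw [← MulEquiv.prime_iff (finSuccEquiv ℝ 3), finSuccEquiv_P₁]
  exact UniqueFactorizationMonoid.irreducible_iff_prime.mp <|
    Polynomial.irreducible_X_pow_sub_C_of_forall_pow_ne Nat.prime_two sq_ne_X_sq_sub_X_sq_add_X_sq

noncomputable def hyperbolicChange : MvPolynomial (Fin 4) ℝ ≃ₐ[ℝ] MvPolynomial (Fin 4) ℝ :=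
  AlgEquiv.ofAlgHom
    (aeval ![X 0 + (2⁻¹ : ℝ) • X 1, X 0 - (2⁻¹ : ℝ) • X 1,
      X 2 + (2⁻¹ : ℝ) • X 3, X 2 - (2⁻¹ : ℝ) • X 3])
    (aeval ![(2⁻¹ : ℝ) • (X 0 + X 1), X 0 - X 1, (2⁻¹ : ℝ) • (X 2 + X 3), X 2 - X 3])
    (algHom_ext fun i => by
      fin_cases i <;>
        simp only [AlgHom.comp_apply, AlgHom.id_apply, aeval_X, map_add, map_sub, map_smul,
          Fin.zero_eta, Fin.mk_one, Fin.reduceFinMk, Matrix.cons_val] <;>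
        module)
    (algHom_ext fun i => by
      fin_cases i <;>
        simp only [AlgHom.comp_apply, AlgHom.id_apply, aeval_X, map_add, map_sub, map_smul,
          Fin.zero_eta, Fin.mk_one, Fin.reduceFinMk, Matrix.cons_val] <;>
        module)

theorem hyperbolicChange_P₁ : hyperbolicChange P₁ = P₂ := by
  have h_half : (C 2⁻¹ * 2 : MvPolynomial (Fin 4) ℝ) = 1 := by
    rw [← map_ofNat C 2, ← C_mul, inv_mul_cancel₀ two_ne_zero, C_1]
  simp only [hyperbolicChange, AlgEquiv.ofAlgHom_apply, map_sub, map_add, map_pow, aeval_X,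
    Matrix.cons_val, smul_eq_C_mul]
  linear_combination (2 * X 0 * X 1 + 2 * X 2 * X 3) * h_half

theorem prime_P₂ : Prime P₂ := by
  rw [← hyperbolicChange_P₁, MulEquiv.prime_iff]
  exact prime_P₁

theorem not_P₁_dvd_P₂ : ¬ P₁ ∣ P₂ := by
  rintro ⟨q, hq⟩
  simpa using congrArg (eval ![1, 1, 0, 0]) hq

theorem not_P₂_dvd_P₁ : ¬ P₂ ∣ P₁ := by
  rintro ⟨q, hq⟩
  simpa using congrArg (eval ![1, 0, 0, 0]) hq

end Lefschetz

/-- `P¹ = x₁² − x₂² + x₃² − x₄²` and `P² = 2(x₁x₂ + x₃x₄)` form a regular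
sequence in ℝ[x₁,x₂,x₃,x₄] (in either order): `P¹` is not a zero divisor, `P²`
is not a zero divisor modulo `P¹`, and `P¹` is not a zero divisor modulo `P²`. -/
theorem lefschetz_casimirs_regular_sequence :
    (∀ g : MvPolynomial (Fin 4) ℝ,
      (X 0 ^ 2 - X 1 ^ 2 + X 2 ^ 2 - X 3 ^ 2) * g = 0 → g = 0) ∧
    (∀ g : MvPolynomial (Fin 4) ℝ,
      (2 * (X 0 * X 1 + X 2 * X 3)) * g = 0 → g = 0) ∧
    (∀ g : MvPolynomial (Fin 4) ℝ,
      (2 * (X 0 * X 1 + X 2 * X 3)) * g ∈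
          Ideal.span ({X 0 ^ 2 - X 1 ^ 2 + X 2 ^ 2 - X 3 ^ 2} :
            Set (MvPolynomial (Fin 4) ℝ)) →
        g ∈ Ideal.span ({X 0 ^ 2 - X 1 ^ 2 + X 2 ^ 2 - X 3 ^ 2} :
            Set (MvPolynomial (Fin 4) ℝ))) ∧
    (∀ g : MvPolynomial (Fin 4) ℝ,
      (X 0 ^ 2 - X 1 ^ 2 + X 2 ^ 2 - X 3 ^ 2) * g ∈
          Ideal.span ({2 * (X 0 * X 1 + X 2 * X 3)} :
            Set (MvPolynomial (Fin 4) ℝ)) →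
        g ∈ Ideal.span ({2 * (X 0 * X 1 + X 2 * X 3)} :
            Set (MvPolynomial (Fin 4) ℝ))) :=
  open Lefschetz in
  ⟨fun _ hg => (mul_eq_zero.mp hg).resolve_left prime_P₁.ne_zero,
    fun _ hg => (mul_eq_zero.mp hg).resolve_left prime_P₂.ne_zero,
    fun _ => prime_P₁.mem_span_singleton_of_mul_mem not_P₁_dvd_P₂,
    fun _ => prime_P₂.mem_span_singleton_of_mul_mem not_P₂_dvd_P₁⟩
end
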